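/- (Dual set of a face is a segment of length equal to the jump.) In the star setup, let F be a (d−1)-dimensional face of the triangulation containing 0 that is contained in exactly two simplices K⁺, K⁻ ∈ 𝒦, with n_F the unit normal to F pointing from K⁺ towards K⁻, and assume some point of F lies in the topological interior of N(F) = K⁺ ∪ K⁻. Let ∇(γ|_{K±}) denote the constant gradients of the affine functions agreeing with γ on K±, and J_F(γ) := ⟨∇(γ|_{K⁻}) − ∇(γ|_{K⁺}), n_F⟩. Then: (a) ∇(γ|_{K⁻}) − ∇(γ|_{K⁺}) = J_F(γ) n_F with J_F(γ) ≥ 0; (b) the dual set F* is the closed segment with endpoints ∇(γ|_{K⁺}) and ∇(γ|_{K⁻}); in particular the length of F* equals J_F(γ). -/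

import Mathlib

open Set Metric MeasureTheory Filter
open scoped RealInnerProductSpace

noncomputable section

/-- The closed simplex with vertex set `{0} ∪ S`. -/
def splx {d : ℕ} (S : Finset (EuclideanSpace ℝ (Fin d))) : Set (EuclideanSpace ℝ (Fin d)) :=
  convexHull ℝ (insert (0 : EuclideanSpace ℝ (Fin d)) (S : Set (EuclideanSpace ℝ (Fin d))))

/-- **Star setup**: a conforming finite collection of `d`-simplices sharing the vertex `0`
whose union is a neighborhood of `0`, together with a convex function `γ` vanishing at `0`
which is affine on each simplex.  Each simplex is recorded by its finset `S` of nonzero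
vertices, the simplex itself being `conv({0} ∪ S)`. -/
structure StarSetup (d : ℕ) where
  /-- The collection of (vertex sets of) `d`-simplices of the star. -/
  K : Finset (Finset (EuclideanSpace ℝ (Fin d)))
  /-- The piecewise affine convex function. -/
  γ : EuclideanSpace ℝ (Fin d) → ℝ
  K_nonempty : K.Nonempty
  card_eq : ∀ S ∈ K, S.card = d
  zero_not_mem : ∀ S ∈ K, (0 : EuclideanSpace ℝ (Fin d)) ∉ S
  affine_indep : ∀ S ∈ K, AffineIndependent ℝ
    (fun p : (insert (0 : EuclideanSpace ℝ (Fin d)) (S : Set (EuclideanSpace ℝ (Fin d))) :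
      Set (EuclideanSpace ℝ (Fin d))) => (p : EuclideanSpace ℝ (Fin d)))
  conforming : ∀ S₁ ∈ K, ∀ S₂ ∈ K, splx S₁ ∩ splx S₂ =
    convexHull ℝ (insert (0 : EuclideanSpace ℝ (Fin d))
      ((S₁ : Set (EuclideanSpace ℝ (Fin d))) ∩ (S₂ : Set (EuclideanSpace ℝ (Fin d)))))
  nhd : (⋃ S ∈ K, splx S) ∈ nhds (0 : EuclideanSpace ℝ (Fin d))
  convex_γ : ConvexOn ℝ Set.univ γ
  γ_zero : γ 0 = 0
  affine_on : ∀ S ∈ K, ∃ (p : EuclideanSpace ℝ (Fin d)) (c : ℝ),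
    ∀ x ∈ splx S, γ x = ⟪p, x⟫ + c

namespace StarSetup

variable {d : ℕ} (st : StarSetup d)

/-- The star `ω = ⋃_{K ∈ 𝒦} K` around the origin. -/
def ω : Set (EuclideanSpace ℝ (Fin d)) := ⋃ S ∈ st.K, splx S

/-- The set of nonzero vertices `Z` of the star. -/
def Z : Set (EuclideanSpace ℝ (Fin d)) := ⋃ S ∈ st.K, (S : Set (EuclideanSpace ℝ (Fin d)))

/-- The local subdifferential `∂γ(0) = { w : ⟨w, x⟩ ≤ γ(x) for all x ∈ ω }`. -/
def subdiff : Set (EuclideanSpace ℝ (Fin d)) :=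
  { w | ∀ x ∈ st.ω, ⟪w, x⟫ ≤ st.γ x }

/-- `S` records a face `conv({0} ∪ S)` of the triangulation containing `0`. -/
def IsFace (S : Finset (EuclideanSpace ℝ (Fin d))) : Prop :=
  ∃ S' ∈ st.K, S ⊆ S'

/-- The dual set `T* = { w ∈ ∂γ(0) : ⟨w, z⟩ = γ(z) for all z ∈ T }` of the face
`T = conv({0} ∪ S)`. -/
def dual (S : Finset (EuclideanSpace ℝ (Fin d))) : Set (EuclideanSpace ℝ (Fin d)) :=
  { w ∈ st.subdiff | ∀ z ∈ splx S, ⟪w, z⟫ = st.γ z }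

/-- `N(T) = ⋃ { K ∈ 𝒦 : T ⊆ K }` for the face `T = conv({0} ∪ S)`. -/
def N (S : Finset (EuclideanSpace ℝ (Fin d))) : Set (EuclideanSpace ℝ (Fin d)) :=
  ⋃ S' ∈ {S' : Finset (EuclideanSpace ℝ (Fin d)) | S' ∈ st.K ∧ splx S ⊆ splx S'}, splx S'

end StarSetup

section Aux

variable {d : ℕ}

private lemma orth_key (S : Finset (EuclideanSpace ℝ (Fin d)))
    (hlin : LinearIndependent ℝ
      (fun x : (S : Set (EuclideanSpace ℝ (Fin d))) => (x : EuclideanSpace ℝ (Fin d))))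
    (hcard : S.card = d - 1) (hd : 2 ≤ d)
    (n : EuclideanSpace ℝ (Fin d)) (hn : ‖n‖ = 1)
    (hn_orth : ∀ z ∈ S, ⟪n, z⟫ = 0)
    (v : EuclideanSpace ℝ (Fin d)) (hv : ∀ z ∈ S, ⟪v, z⟫ = 0) :
    v = ⟪v, n⟫ • n := by
  set W := (Submodule.span ℝ (S : Set (EuclideanSpace ℝ (Fin d))))ᗮ with hW
  have hn0 : n ≠ 0 := by intro h; rw [h, norm_zero] at hn; norm_num at hn
  have hmem : ∀ (u : EuclideanSpace ℝ (Fin d)), (∀ z ∈ S, ⟪u, z⟫ = 0) → u ∈ W := by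
    intro u hu
    rw [hW, Submodule.mem_orthogonal]
    intro x hx
    refine Submodule.span_induction (fun z hz => ?_) (by simp) (fun a b _ _ ha hb => by
      rw [inner_add_left, ha, hb, add_zero]) (fun c a _ ha => by
      rw [inner_smul_left, ha, mul_zero]) hx
    rw [real_inner_comm]; exact hu z hz
  have hnW : n ∈ W := hmem n hn_orth
  have hvW : v ∈ W := hmem v hv
  have hrank : Module.finrank ℝ W = 1 := by
    have h1 := Submodule.finrank_add_finrank_orthogonal
      (K := Submodule.span ℝ (S : Set (EuclideanSpace ℝ (Fin d))))
    have h2 : Module.finrank ℝ (Submodule.span ℝ (S : Set (EuclideanSpace ℝ (Fin d)))) = d - 1 := by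
      rw [finrank_span_finset_eq_card hlin, hcard]
    rw [h2, finrank_euclideanSpace_fin] at h1
    rw [← hW] at h1
    omega
  have hWeq : (Submodule.span ℝ {n}) = W := by
    apply Submodule.eq_of_le_of_finrank_le
    · rw [Submodule.span_singleton_le_iff_mem]; exact hnW
    · rw [hrank, finrank_span_singleton hn0]
  rw [← hWeq, Submodule.mem_span_singleton] at hvW
  obtain ⟨a, ha⟩ := hvW
  have : ⟪v, n⟫ = a := by
    rw [← ha, real_inner_smul_left, real_inner_self_eq_norm_sq, hn]; ring
  rw [this, ha]

private lemma minorant (γ : EuclideanSpace ℝ (Fin d) → ℝ)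
    (hγ : ConvexOn ℝ Set.univ γ)
    (Sq : Finset (EuclideanSpace ℝ (Fin d))) (hcard : Sq.card = d)
    (h0 : (0 : EuclideanSpace ℝ (Fin d)) ∉ Sq)
    (hA : AffineIndependent ℝ
      (fun p : (insert (0 : EuclideanSpace ℝ (Fin d)) (Sq : Set (EuclideanSpace ℝ (Fin d))) :
        Set (EuclideanSpace ℝ (Fin d))) => (p : EuclideanSpace ℝ (Fin d))))
    (q : EuclideanSpace ℝ (Fin d)) (hq : ∀ x ∈ splx Sq, γ x = ⟪q, x⟫)
    (y : EuclideanSpace ℝ (Fin d)) : ⟪q, y⟫ ≤ γ y := by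
  classical
  have hspan : affineSpan ℝ (insert (0 : EuclideanSpace ℝ (Fin d)) (Sq : Set (EuclideanSpace ℝ (Fin d)))) = ⊤ := by
    have hcoe : (insert (0 : EuclideanSpace ℝ (Fin d)) (Sq : Set (EuclideanSpace ℝ (Fin d))))
        = ((insert 0 Sq : Finset (EuclideanSpace ℝ (Fin d))) : Set (EuclideanSpace ℝ (Fin d))) := by
      simp
    rw [hcoe] at hA ⊢
    rw [← Subtype.range_coe (s := ((insert 0 Sq : Finset (EuclideanSpace ℝ (Fin d))) : Set (EuclideanSpace ℝ (Fin d))))]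
    rw [hA.affineSpan_eq_top_iff_card_eq_finrank_add_one]
    simp [Finset.card_insert_of_notMem h0, hcard]
  have hintr : (interior (splx Sq)).Nonempty := by
    rw [splx, (convex_convexHull ℝ _).interior_nonempty_iff_affineSpan_eq_top,
      affineSpan_convexHull]
    exact hspan
  obtain ⟨x0, hx0⟩ := hintr
  have hx0' : x0 ∈ splx Sq := interior_subset hx0
  by_cases hxy : x0 = y
  · subst hxy; exact le_of_eq (hq x0 hx0').symm
  · obtain ⟨ε, hε, hball⟩ := Metric.isOpen_iff.1 isOpen_interior x0 hx0
    have hr : (0:ℝ) < ‖x0 - y‖ := by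
      rw [norm_pos_iff]; intro h; exact hxy (by rwa [sub_eq_zero] at h)
    set s : ℝ := ε / (2 * ‖x0 - y‖) with hs_def
    have hs : 0 < s := by positivity
    have hx1 : x0 + s • (x0 - y) ∈ splx Sq := by
      apply interior_subset
      apply hball
      rw [Metric.mem_ball, dist_eq_norm]
      have : x0 + s • (x0 - y) - x0 = s • (x0 - y) := by abel
      rw [this, norm_smul, Real.norm_eq_abs, abs_of_pos hs, hs_def]
      rw [div_mul_eq_mul_div, mul_comm]
      rw [mul_div_assoc]
      calc ‖x0-y‖ * (ε / (2 * ‖x0-y‖)) = ε/2 := by field_simp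
        _ < ε := by linarith
    have ha : (0:ℝ) ≤ 1/(1+s) := by positivity
    have hb : (0:ℝ) ≤ s/(1+s) := by positivity
    have hab : (1/(1+s) : ℝ) + s/(1+s) = 1 := by field_simp
    have key := hγ.2 (Set.mem_univ (x0 + s • (x0 - y))) (Set.mem_univ y) ha hb hab
    have hcomb : (1/(1+s)) • (x0 + s • (x0 - y)) + (s/(1+s)) • y = x0 := by
      have h1s : (1:ℝ)+s ≠ 0 := by positivity
      match_scalars <;> field_simp <;> ring
    rw [hcomb] at key
    rw [hq _ hx0', hq _ hx1] at key
    rw [inner_add_right, real_inner_smul_right, inner_sub_right] at key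
    have h1s : (0:ℝ) < 1+s := by positivity
    set A := ⟪q, x0⟫
    set B := ⟪q, y⟫
    have := mul_le_mul_of_nonneg_left key (le_of_lt h1s)
    rw [mul_add] at this
    simp only [smul_eq_mul] at this
    field_simp at this
    nlinarith [this, hs]

end Aux

set_option maxHeartbeats 1000000 in
/-- **The dual set of a `(d−1)`-face is a segment of length equal to the jump.**
If the face `F = conv({0} ∪ S)` (with `S.card = d − 1`) is shared by exactly the two
simplices recorded by `Sp, Sm ∈ 𝒦`, with unit normal `n` to `F` pointing from the `Sp`-side
to the `Sm`-side, and `γ` agrees with `⟨p⁺,·⟩ + c⁺` on the first simplex and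
`⟨p⁻,·⟩ + c⁻` on the second, then with `J := ⟨p⁻ − p⁺, n⟩` one has
`p⁻ − p⁺ = J n`, `J ≥ 0`, the dual set `F*` is the segment `[p⁺, p⁻]`, and its length
equals `J`. -/
theorem stmt_18 (d : ℕ) (hd : 2 ≤ d) (st : StarSetup d)
    (S : Finset (EuclideanSpace ℝ (Fin d))) (hcard : S.card = d - 1)
    (Sp Sm : Finset (EuclideanSpace ℝ (Fin d))) (hSp : Sp ∈ st.K) (hSm : Sm ∈ st.K)
    (hne : Sp ≠ Sm) (hSSp : S ⊆ Sp) (hSSm : S ⊆ Sm)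
    (honly : ∀ S' ∈ st.K, S ⊆ S' → S' = Sp ∨ S' = Sm)
    (n : EuclideanSpace ℝ (Fin d)) (hn : ‖n‖ = 1)
    (hn_orth : ∀ z ∈ (S : Set (EuclideanSpace ℝ (Fin d))), ⟪n, z⟫ = 0)
    (hn_p : ∀ x ∈ splx Sp, ⟪n, x⟫ ≤ 0)
    (hn_m : ∀ x ∈ splx Sm, 0 ≤ ⟪n, x⟫)
    (hint : ∃ x ∈ splx S, x ∈ interior (splx Sp ∪ splx Sm))
    (pp pm : EuclideanSpace ℝ (Fin d)) (cp cm : ℝ)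
    (hγp : ∀ x ∈ splx Sp, st.γ x = ⟪pp, x⟫ + cp)
    (hγm : ∀ x ∈ splx Sm, st.γ x = ⟪pm, x⟫ + cm) :
    pm - pp = ⟪pm - pp, n⟫ • n ∧ 0 ≤ ⟪pm - pp, n⟫ ∧
      st.dual S = segment ℝ pp pm ∧ dist pp pm = ⟪pm - pp, n⟫ := by
  classical
  obtain ⟨xb, hxbS, hxbint⟩ := hint
  have hSp_sub : splx S ⊆ splx Sp :=
    convexHull_mono (Set.insert_subset_insert (Finset.coe_subset.mpr hSSp))
  have hSm_sub : splx S ⊆ splx Sm :=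
    convexHull_mono (Set.insert_subset_insert (Finset.coe_subset.mpr hSSm))
  have h0p : (0 : EuclideanSpace ℝ (Fin d)) ∈ splx Sp :=
    subset_convexHull ℝ _ (Set.mem_insert _ _)
  have h0m : (0 : EuclideanSpace ℝ (Fin d)) ∈ splx Sm :=
    subset_convexHull ℝ _ (Set.mem_insert _ _)
  have hcp : cp = 0 := by
    have h := hγp 0 h0p; rw [st.γ_zero, inner_zero_right] at h; linarith
  have hcm : cm = 0 := by
    have h := hγm 0 h0m; rw [st.γ_zero, inner_zero_right] at h; linarith
  have hγp' : ∀ x ∈ splx Sp, st.γ x = ⟪pp, x⟫ := fun x hx => by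
    rw [hγp x hx, hcp, add_zero]
  have hγm' : ∀ x ∈ splx Sm, st.γ x = ⟪pm, x⟫ := fun x hx => by
    rw [hγm x hx, hcm, add_zero]
  have hvert : ∀ z ∈ S, z ∈ splx S := fun z hz =>
    subset_convexHull ℝ _ (Set.mem_insert_of_mem _ hz)
  -- linear independence of S
  have hlin : LinearIndependent ℝ
      (fun x : (S : Set (EuclideanSpace ℝ (Fin d))) => (x : EuclideanSpace ℝ (Fin d))) := by
    have hA := st.affine_indep Sp hSp
    rw [affineIndependent_set_iff_linearIndependent_vsub ℝ
      (Set.mem_insert (0 : EuclideanSpace ℝ (Fin d)) _)] at hA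
    have himg : (fun p : EuclideanSpace ℝ (Fin d) => p -ᵥ (0 : EuclideanSpace ℝ (Fin d))) ''
        (insert (0 : EuclideanSpace ℝ (Fin d)) (Sp : Set (EuclideanSpace ℝ (Fin d))) \ {0})
        = (Sp : Set (EuclideanSpace ℝ (Fin d))) := by
      simp only [vsub_eq_sub, sub_zero, Set.image_id']
      exact Set.insert_diff_self_of_notMem (by simpa using st.zero_not_mem Sp hSp)
    rw [himg] at hA
    exact LinearIndepOn.mono (R := ℝ) (v := id) hA (Finset.coe_subset.mpr hSSp)
  have key := orth_key S hlin hcard hd n hn (fun z hz => hn_orth z hz)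
  -- pm - pp is orthogonal to S
  have hdiff : ∀ z ∈ S, ⟪pm - pp, z⟫ = 0 := by
    intro z hz
    have hz1 : z ∈ splx S := hvert z hz
    rw [inner_sub_left, ← hγp' z (hSp_sub hz1), ← hγm' z (hSm_sub hz1), sub_self]
  have haEq : pm - pp = ⟪pm - pp, n⟫ • n := key _ hdiff
  set J := ⟪pm - pp, n⟫ with hJdef
  have hJ' : J = ⟪pm, n⟫ - ⟪pp, n⟫ := by rw [hJdef, inner_sub_left]
  -- facts about the interior point xb
  have hxb_n : ⟪n, xb⟫ = 0 := by
    have hlm : IsLinearMap ℝ (fun x : EuclideanSpace ℝ (Fin d) => ⟪n, x⟫) :=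
      ⟨fun a b => inner_add_right n a b, fun c a => real_inner_smul_right n a c⟩
    have hconv : Convex ℝ {x : EuclideanSpace ℝ (Fin d) | ⟪n, x⟫ = (0:ℝ)} :=
      convex_hyperplane hlm 0
    have hsub : splx S ⊆ {x : EuclideanSpace ℝ (Fin d) | ⟪n, x⟫ = (0:ℝ)} := by
      apply convexHull_min _ hconv
      intro x hx
      rcases hx with rfl | hx
      · simp
      · exact hn_orth x hx
    exact hsub hxbS
  have hγxb_p : st.γ xb = ⟪pp, xb⟫ := hγp' xb (hSp_sub hxbS)
  have hγxb_m : st.γ xb = ⟪pm, xb⟫ := hγm' xb (hSm_sub hxbS)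
  have hpmxb : ⟪pm, xb⟫ = ⟪pp, xb⟫ := by rw [← hγxb_p, ← hγxb_m]
  obtain ⟨ε, hε, hball⟩ := Metric.isOpen_iff.1 isOpen_interior xb hxbint
  set s : ℝ := ε / 2 with hs_def
  have hs : 0 < s := by positivity
  have hmemball : ∀ t : ℝ, |t| < ε → xb + t • n ∈ splx Sp ∪ splx Sm := by
    intro t ht
    have hmem : xb + t • n ∈ Metric.ball xb ε := by
      rw [Metric.mem_ball, dist_eq_norm]
      have he : xb + t • n - xb = t • n := by abel
      rw [he, norm_smul, hn, mul_one, Real.norm_eq_abs]; exact ht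
    exact interior_subset (hball hmem)
  have hinner_t : ∀ t : ℝ, ⟪n, xb + t • n⟫ = t := by
    intro t
    rw [inner_add_right, real_inner_smul_right, real_inner_self_eq_norm_sq, hn, hxb_n]; ring
  have hplus : xb + s • n ∈ splx Sm := by
    rcases hmemball s (by rw [abs_of_pos hs]; rw [hs_def]; linarith) with h | h
    · exfalso; have hc := hn_p _ h; rw [hinner_t] at hc; linarith
    · exact h
  have hminus : xb + (-s) • n ∈ splx Sp := by
    rcases hmemball (-s) (by rw [abs_neg, abs_of_pos hs]; rw [hs_def]; linarith) with h | h
    · exact h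
    · exfalso; have hc := hn_m _ h; rw [hinner_t] at hc; linarith
  have hγplus : st.γ (xb + s • n) = ⟪pm, xb⟫ + s * ⟪pm, n⟫ := by
    rw [hγm' _ hplus, inner_add_right, real_inner_smul_right]
  have hγminus : st.γ (xb + (-s) • n) = ⟪pp, xb⟫ - s * ⟪pp, n⟫ := by
    rw [hγp' _ hminus, inner_add_right, real_inner_smul_right]; ring
  -- J ≥ 0
  have hJ : 0 ≤ J := by
    have hhalf : (0:ℝ) ≤ 1/2 := by norm_num
    have hmid := st.convex_γ.2 (Set.mem_univ (xb + s • n)) (Set.mem_univ (xb + (-s) • n))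
      hhalf hhalf (by norm_num)
    have hpt : (1/2 : ℝ) • (xb + s • n) + (1/2 : ℝ) • (xb + (-s) • n) = xb := by
      match_scalars <;> ring
    rw [hpt, hγxb_p, hγplus, hγminus, hpmxb, smul_eq_mul, smul_eq_mul] at hmid
    rw [hJ']
    nlinarith [hmid, hs]
  -- subdifferential memberships
  have hppsub : pp ∈ st.subdiff := fun x _ =>
    minorant st.γ st.convex_γ Sp (st.card_eq Sp hSp) (st.zero_not_mem Sp hSp)
      (st.affine_indep Sp hSp) pp hγp' x
  have hpmsub : pm ∈ st.subdiff := fun x _ =>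
    minorant st.γ st.convex_γ Sm (st.card_eq Sm hSm) (st.zero_not_mem Sm hSm)
      (st.affine_indep Sm hSm) pm hγm' x
  -- segment ⊆ dual
  have hseg_sub : segment ℝ pp pm ⊆ st.dual S := by
    rintro w ⟨a, b, ha, hb, hab, rfl⟩
    constructor
    · intro x hx
      have h1 := hppsub x hx
      have h2 := hpmsub x hx
      rw [inner_add_left, real_inner_smul_left, real_inner_smul_left]
      have e : a * st.γ x + b * st.γ x = st.γ x := by linear_combination st.γ x * hab
      linarith [mul_le_mul_of_nonneg_left h1 ha, mul_le_mul_of_nonneg_left h2 hb, e]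
    · intro z hz
      have h1 := (hγp' z (hSp_sub hz)).symm
      have h2 := (hγm' z (hSm_sub hz)).symm
      rw [inner_add_left, real_inner_smul_left, real_inner_smul_left]
      linear_combination a * h1 + b * h2 + st.γ z * hab
  -- dual ⊆ segment
  have hdual_sub : st.dual S ⊆ segment ℝ pp pm := by
    intro w hw
    obtain ⟨hwsub, hwz⟩ := hw
    have hworth : ∀ z ∈ S, ⟪w - pp, z⟫ = 0 := by
      intro z hz
      have hz1 : z ∈ splx S := hvert z hz
      rw [inner_sub_left, hwz z hz1, hγp' z (hSp_sub hz1), sub_self]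
    have hwt : w - pp = ⟪w - pp, n⟫ • n := key _ hworth
    set t := ⟪w - pp, n⟫ with ht_def
    have hw' : w = pp + t • n := by
      have := hwt; rw [sub_eq_iff_eq_add] at this; rw [this]; abel
    have hwx : ∀ x : EuclideanSpace ℝ (Fin d), ⟪w, x⟫ = ⟪pp, x⟫ + t * ⟪n, x⟫ := by
      intro x; rw [hw', inner_add_left, real_inner_smul_left]
    have hup : ⟪w, xb + s • n⟫ ≤ st.γ (xb + s • n) :=
      hwsub _ (Set.mem_biUnion hSm hplus)
    have hdown : ⟪w, xb + (-s) • n⟫ ≤ st.γ (xb + (-s) • n) :=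
      hwsub _ (Set.mem_biUnion hSp hminus)
    have ht0 : 0 ≤ t := by
      rw [hwx, hγminus, hinner_t] at hdown
      have hppin : ⟪pp, xb + (-s) • n⟫ = ⟪pp, xb⟫ - s * ⟪pp, n⟫ := by
        rw [inner_add_right, real_inner_smul_right]; ring
      rw [hppin] at hdown
      nlinarith [hdown, hs]
    have htJ : t ≤ J := by
      rw [hwx, hγplus, hinner_t] at hup
      have hppin : ⟪pp, xb + s • n⟫ = ⟪pp, xb⟫ + s * ⟪pp, n⟫ := by
        rw [inner_add_right, real_inner_smul_right]
      rw [hppin, hpmxb] at hup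
      rw [hJ']
      nlinarith [hup, hs]
    by_cases hJ0 : J = 0
    · have ht0' : t = 0 := le_antisymm (hJ0 ▸ htJ) ht0
      have hwpp : w = pp := by rw [hw', ht0', zero_smul, add_zero]
      rw [hwpp]; exact left_mem_segment ℝ pp pm
    · have hJpos : 0 < J := lt_of_le_of_ne hJ (Ne.symm hJ0)
      refine ⟨1 - t/J, t/J, ?_, ?_, by ring, ?_⟩
      · have h1 : t/J ≤ 1 := (div_le_one hJpos).mpr htJ
        linarith
      · positivity
      · have hpm : pm = J • n + pp := by rw [← haEq]; abel
        have hdiv : (t/J) * J = t := div_mul_cancel₀ t hJ0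
        rw [hpm, hw']
        calc (1 - t/J) • pp + (t/J) • (J • n + pp)
            = pp + ((t/J) * J) • n := by module
          _ = pp + t • n := by rw [hdiv]
  refine ⟨haEq, hJ, Set.Subset.antisymm hdual_sub hseg_sub, ?_⟩
  rw [dist_comm, dist_eq_norm, haEq, norm_smul, hn, mul_one, Real.norm_eq_abs, abs_of_nonneg hJ]


end
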